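/- Harary's bipartition characterization of balance: a signed adjacency matrix A on a finite vertex set V is balanced (there exists σ : V → {−1, 1} with A u v = σ u · σ v · |A u v| for all u, v) if and only if every closed walk in the underlying graph of A has positive sign, i.e. for every sequence of vertices v₀, v₁, …, v_k with v_k = v₀ and A v_i v_{i+1} ≠ 0 for all i < k, the product ∏_{i<k} A v_i v_{i+1} equals +1. -/

import Mathlib

open Matrix Finset

/-- A signed adjacency matrix: symmetric, zero diagonal, entries in {-1, 0, 1}. -/
def IsSignedAdj {V : Type*} [Fintype V] (A : Matrix V V ℝ) : Prop :=
  A.IsSymm ∧ (∀ v, A v v = 0) ∧ ∀ u v, A u v = -1 ∨ A u v = 0 ∨ A u v = 1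

/-- `A` is balanced if some `σ : V → {−1, 1}` satisfies `A u v = σ u * σ v * |A u v|`. -/
def IsBalanced {V : Type*} [Fintype V] (A : Matrix V V ℝ) : Prop :=
  ∃ σ : V → ℝ, (∀ v, σ v = 1 ∨ σ v = -1) ∧ ∀ u v, A u v = σ u * σ v * |A u v|

/-!
If `A u v = σ u σ v` on every edge, the sign of a walk telescopes to `σ v₀ σ v_k`,
which is `1` for a closed walk. Conversely, if closed walks are positive, fix a root in each
connected component of the underlying graph and let `σ v` be the sign of any walk from the root
of its component to `v`. For an edge `uv`, the closed walk root → u → v → root has sign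
`σ u · A u v · σ v = 1`, and as all these signs square to `1`, `A u v = σ u σ v`.
-/

theorem Finset.prod_range_mul_succ_eq {M : Type*} [CommMonoid M] {g : ℕ → M}
    (hg : ∀ i, g i * g i = 1) (k : ℕ) :
    ∏ i ∈ range k, g i * g (i + 1) = g 0 * g k := by
  induction k with
  | zero => simp [hg]
  | succ k ih =>
    rw [prod_range_succ, ih]
    calc g 0 * g k * (g k * g (k + 1)) = g 0 * (g k * g k) * g (k + 1) := by ac_rfl
      _ = g 0 * g (k + 1) := by rw [hg, mul_one]

namespace SimpleGraph

variable {V M : Type*} [CommMonoid M] {G : SimpleGraph V} (A : V → V → M)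

namespace Walk

def prodWeight {u v : V} (p : G.Walk u v) : M :=
  (p.darts.map fun d => A d.fst d.snd).prod

@[simp]
lemma prodWeight_nil {u : V} : (nil : G.Walk u u).prodWeight A = 1 := rfl

@[simp]
lemma prodWeight_cons {u v w : V} (h : G.Adj u v) (p : G.Walk v w) :
    (cons h p).prodWeight A = A u v * p.prodWeight A := rfl

@[simp]
lemma prodWeight_append {u v w : V} (p : G.Walk u v) (q : G.Walk v w) :
    (p.append q).prodWeight A = p.prodWeight A * q.prodWeight A := by
  simp [prodWeight, darts_append]

variable {A}

lemma prodWeight_reverse (hA : ∀ u v, A v u = A u v) {u v : V} (p : G.Walk u v) :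
    p.reverse.prodWeight A = p.prodWeight A := by
  simp [prodWeight, darts_reverse, List.prod_reverse, Function.comp_def, hA]

lemma prodWeight_mul_self (hA : ∀ u v, G.Adj u v → A u v * A u v = 1) {u v : V}
    (p : G.Walk u v) : p.prodWeight A * p.prodWeight A = 1 := by
  induction p with
  | nil => simp
  | cons h p ih =>
    calc _ = (A _ _ * A _ _) * (p.prodWeight A * p.prodWeight A) := by
          simp only [prodWeight_cons]; ac_rfl
      _ = 1 := by rw [hA _ _ h, ih, one_mul]

variable (A) in
lemma prodWeight_eq_prod_range {u v : V} (p : G.Walk u v) :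
    p.prodWeight A = ∏ i ∈ range p.length, A (p.getVert i) (p.getVert (i + 1)) := by
  induction p with
  | nil => simp
  | cons h p ih => simp [prod_range_succ', ih, mul_comm]

end Walk

variable {A}

lemma eq_prodWeight_mul_prodWeight_of_adj (hsymm : ∀ u v, A v u = A u v)
    (hsq : ∀ u v, G.Adj u v → A u v * A u v = 1)
    (hclosed : ∀ a (w : G.Walk a a), w.prodWeight A = 1)
    {a u v : V} (p : G.Walk a u) (q : G.Walk a v) (h : G.Adj u v) :
    A u v = p.prodWeight A * q.prodWeight A := by
  have hloop : p.prodWeight A * A u v * q.prodWeight A = 1 := by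
    simpa [Walk.prodWeight_reverse hsymm, mul_assoc] using
      hclosed a (p.append (.cons h q.reverse))
  calc A u v
        = (p.prodWeight A * p.prodWeight A) * A u v * (q.prodWeight A * q.prodWeight A) := by
        rw [p.prodWeight_mul_self hsq, q.prodWeight_mul_self hsq, one_mul, mul_one]
    _ = p.prodWeight A * q.prodWeight A * (p.prodWeight A * A u v * q.prodWeight A) := by ac_rfl
    _ = p.prodWeight A * q.prodWeight A := by rw [hloop, mul_one]

theorem exists_potential_of_forall_closed_prodWeight_eq_one (hsymm : ∀ u v, A v u = A u v)
    (hsq : ∀ u v, G.Adj u v → A u v * A u v = 1)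
    (hclosed : ∀ a (w : G.Walk a a), w.prodWeight A = 1) :
    ∃ σ : V → M, (∀ v, σ v * σ v = 1) ∧ ∀ u v, G.Adj u v → A u v = σ u * σ v := by
  let root (v : V) : V := (G.connectedComponentMk v).out
  have hroot (v : V) : G.Reachable (root v) v :=
    ConnectedComponent.exact (G.connectedComponentMk v).out_eq
  obtain ⟨σ, hσ⟩ : ∃ σ : V → M, ∀ v, ∃ p : G.Walk (root v) v, p.prodWeight A = σ v :=
    ⟨_, fun v => ⟨(hroot v).some, rfl⟩⟩
  refine ⟨σ, fun v => ?_, fun u v h => ?_⟩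
  · obtain ⟨p, hp⟩ := hσ v
    exact hp ▸ p.prodWeight_mul_self hsq
  have hσv := hσ v
  rw [show root v = root u by simp only [root, ConnectedComponent.sound h.reachable]] at hσv
  obtain ⟨p, hp⟩ := hσ u
  obtain ⟨q, hq⟩ := hσv
  rw [← hp, ← hq]
  exact eq_prodWeight_mul_prodWeight_of_adj hsymm hsq hclosed p q h

end SimpleGraph

namespace IsSignedAdj

variable {V : Type*} [Fintype V] {A : Matrix V V ℝ}

def graph (hA : IsSignedAdj A) : SimpleGraph V where
  Adj u v := A u v ≠ 0
  symm := ⟨fun u v h => ne_of_eq_of_ne (hA.1.apply u v) h⟩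
  loopless := ⟨fun v h => h (hA.2.1 v)⟩

lemma abs_eq_one (hA : IsSignedAdj A) {u v : V} (h : A u v ≠ 0) : |A u v| = 1 := by
  rcases hA.2.2 u v with h' | h' | h' <;> simp_all

lemma isBalanced_iff (hA : IsSignedAdj A) :
    IsBalanced A ↔ ∃ σ : V → ℝ, (∀ v, σ v * σ v = 1) ∧ ∀ u v, A u v ≠ 0 → A u v = σ u * σ v := by
  simp only [IsBalanced, ← mul_self_eq_one_iff]
  refine exists_congr fun σ => and_congr_right fun _ => forall₂_congr fun u v => ?_
  by_cases h : A u v = 0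
  · simp [h]
  · simp [h, hA.abs_eq_one h]

lemma forall_closed_prodWeight_eq_one (hA : IsSignedAdj A)
    (hpos : ∀ (k : ℕ) (v : ℕ → V), v k = v 0 → (∀ i < k, A (v i) (v (i + 1)) ≠ 0) →
      ∏ i ∈ range k, A (v i) (v (i + 1)) = 1)
    (a : V) (w : hA.graph.Walk a a) : w.prodWeight A = 1 := by
  rw [w.prodWeight_eq_prod_range A]
  exact hpos _ _ (by rw [w.getVert_length, w.getVert_zero]) fun i hi => w.adj_getVert_succ hi

end IsSignedAdj

/-- Harary's characterization of balance: `A` is balanced if and only if every closed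
walk in the underlying graph of `A` has sign `+1`. -/
theorem isBalanced_iff_closedWalks_positive {V : Type*} [Fintype V]
    (A : Matrix V V ℝ) (hA : IsSignedAdj A) :
    IsBalanced A ↔
      ∀ (k : ℕ) (v : ℕ → V), v k = v 0 → (∀ i < k, A (v i) (v (i + 1)) ≠ 0) →
        ∏ i ∈ Finset.range k, A (v i) (v (i + 1)) = 1 := by
  rw [hA.isBalanced_iff]
  constructor
  · rintro ⟨σ, hσ, hAσ⟩ k v hclosed hwalk
    calc ∏ i ∈ range k, A (v i) (v (i + 1))
        = ∏ i ∈ range k, σ (v i) * σ (v (i + 1)) :=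
          prod_congr rfl fun i hi => hAσ _ _ (hwalk i (mem_range.1 hi))
      _ = σ (v 0) * σ (v k) := prod_range_mul_succ_eq (fun i => hσ (v i)) k
      _ = 1 := by rw [hclosed, hσ]
  · intro hpos
    exact hA.graph.exists_potential_of_forall_closed_prodWeight_eq_one (A := A) hA.1.apply
      (fun u v h => by rw [← abs_mul_abs_self, hA.abs_eq_one h, one_mul])
      (hA.forall_closed_prodWeight_eq_one hpos)
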